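/- The hierarchy W₀ ⊆ W₁ ⊆ ⋯ defined by W₀ = CPre*(O), Coop_{i+1} = Pre(W_i) \ W_i, W_{i+1} = CPre*(Coop_{i+1} ∪ W_i) is non-decreasing, and its union (equivalently, W_n for the first n with Coop_{n+1} = ∅) equals Pre*(O), the set of all states from which O is reachable. -/
import Mathlib


/-- Controllable predecessors: the controller has an input forcing `X`. -/
def CPre {S I O : Type*} (δ : S → I → O → S) (X : Set S) : Set S :=
  {s | ∃ i : I, ∀ o : O, δ s i o ∈ X}

/-- The monotone operator `X ↦ B ∪ CPre X`. -/
def cpreOp {S I O : Type*} (δ : S → I → O → S) (B : Set S) : Set S →o Set S :=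
  ⟨fun X => B ∪ CPre δ X, by
    intro X Y h s hs
    rcases hs with h1 | ⟨i, hi⟩
    · exact Or.inl h1
    · exact Or.inr ⟨i, fun o => h (hi o)⟩⟩

/-- `CPre*(B)`, the least fixpoint of `X ↦ B ∪ CPre X`. -/
def cpreStar {S I O : Type*} (δ : S → I → O → S) (B : Set S) : Set S :=
  OrderHom.lfp (cpreOp δ B)

/-- (Cooperative) predecessors: some input and some output lead into `X`. -/
def PreG {S I O : Type*} (δ : S → I → O → S) (X : Set S) : Set S :=
  {s | ∃ (i : I) (o : O), δ s i o ∈ X}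

/-- The monotone operator `X ↦ B ∪ Pre X`. -/
def preGOp {S I O : Type*} (δ : S → I → O → S) (B : Set S) : Set S →o Set S :=
  ⟨fun X => B ∪ PreG δ X, by
    intro X Y h s hs
    rcases hs with h1 | ⟨i, o, hio⟩
    · exact Or.inl h1
    · exact Or.inr ⟨i, o, h hio⟩⟩

/-- `Pre*(B)`, the least fixpoint of `X ↦ B ∪ Pre X`. -/
def preStarG {S I O : Type*} (δ : S → I → O → S) (B : Set S) : Set S :=
  OrderHom.lfp (preGOp δ B)

/-- The greedy hierarchy: `W₀ = CPre*(O)`,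
`W_{i+1} = CPre*((Pre(W_i) \ W_i) ∪ W_i)`. -/
def Wseq {S I O : Type*} (δ : S → I → O → S) (Obj : Set S) : ℕ → Set S
  | 0 => cpreStar δ Obj
  | i + 1 => cpreStar δ ((PreG δ (Wseq δ Obj i) \ Wseq δ Obj i) ∪ Wseq δ Obj i)


section Helpers
variable {S I O : Type*} (δ : S → I → O → S)

lemma cpreStar_eq (B : Set S) :
    cpreStar δ B = B ∪ CPre δ (cpreStar δ B) :=
  (OrderHom.map_lfp (cpreOp δ B)).symm

lemma subset_cpreStar (B : Set S) : B ⊆ cpreStar δ B := by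
  rw [cpreStar_eq]; exact Set.subset_union_left

lemma cpre_cpreStar (B : Set S) : CPre δ (cpreStar δ B) ⊆ cpreStar δ B := by
  nth_rewrite 2 [cpreStar_eq]; exact Set.subset_union_right

lemma cpreStar_le {B X : Set S} (h1 : B ⊆ X) (h2 : CPre δ X ⊆ X) :
    cpreStar δ B ⊆ X :=
  OrderHom.lfp_le _ (Set.union_subset h1 h2)

lemma preStarG_eq (B : Set S) :
    preStarG δ B = B ∪ PreG δ (preStarG δ B) :=
  (OrderHom.map_lfp (preGOp δ B)).symm

lemma subset_preStarG (B : Set S) : B ⊆ preStarG δ B := by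
  rw [preStarG_eq]; exact Set.subset_union_left

lemma preG_preStarG (B : Set S) : PreG δ (preStarG δ B) ⊆ preStarG δ B := by
  nth_rewrite 2 [preStarG_eq]; exact Set.subset_union_right

lemma preStarG_le {B X : Set S} (h1 : B ⊆ X) (h2 : PreG δ X ⊆ X) :
    preStarG δ B ⊆ X :=
  OrderHom.lfp_le _ (Set.union_subset h1 h2)

lemma cpre_subset_preG [Nonempty O] (X : Set S) : CPre δ X ⊆ PreG δ X := by
  rintro s ⟨i, hi⟩
  exact ⟨i, Classical.arbitrary O, hi _⟩

lemma preG_mono {X Y : Set S} (h : X ⊆ Y) : PreG δ X ⊆ PreG δ Y := by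
  rintro s ⟨i, o, hio⟩; exact ⟨i, o, h hio⟩

lemma cpre_Wseq (Obj : Set S) (n : ℕ) :
    CPre δ (Wseq δ Obj n) ⊆ Wseq δ Obj n := by
  cases n with
  | zero => exact cpre_cpreStar δ Obj
  | succ m => exact cpre_cpreStar δ _

end Helpers

theorem stmt13 {S I O : Type*} [Finite S] [Finite I] [Finite O]
    [Nonempty I] [Nonempty O]
    (δ : S → I → O → S) (Obj : Set S) :
    Monotone (Wseq δ Obj) ∧
    (⋃ i, Wseq δ Obj i) = preStarG δ Obj ∧
    ∀ n, PreG δ (Wseq δ Obj n) \ Wseq δ Obj n = ∅ →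
      Wseq δ Obj n = preStarG δ Obj := by
  have hmono : Monotone (Wseq δ Obj) := by
    apply monotone_nat_of_le_succ
    intro n
    exact (Set.subset_union_right).trans (subset_cpreStar δ _)
  have hsub : ∀ n, Wseq δ Obj n ⊆ preStarG δ Obj := by
    intro n
    induction n with
    | zero =>
      exact cpreStar_le δ (subset_preStarG δ Obj)
        ((cpre_subset_preG δ _).trans (preG_preStarG δ Obj))
    | succ m ih =>
      apply cpreStar_le δ _ ((cpre_subset_preG δ _).trans (preG_preStarG δ Obj))
      apply Set.union_subset
      · exact (Set.diff_subset).trans ((preG_mono δ ih).trans (preG_preStarG δ Obj))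
      · exact ih
  have hUnion : (⋃ i, Wseq δ Obj i) = preStarG δ Obj := by
    apply Set.Subset.antisymm
    · exact Set.iUnion_subset hsub
    · apply preStarG_le δ
      · exact (subset_cpreStar δ Obj).trans (Set.subset_iUnion (Wseq δ Obj) 0)
      · rintro s ⟨i, o, hio⟩
        obtain ⟨n, hn⟩ := Set.mem_iUnion.mp hio
        by_cases hs : s ∈ Wseq δ Obj n
        · exact Set.mem_iUnion.mpr ⟨n, hs⟩
        · refine Set.mem_iUnion.mpr ⟨n + 1, ?_⟩
          exact subset_cpreStar δ _ (Or.inl ⟨⟨i, o, hn⟩, hs⟩)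
  refine ⟨hmono, hUnion, ?_⟩
  intro n hn
  have hfix : Wseq δ Obj (n + 1) = Wseq δ Obj n := by
    show cpreStar δ _ = _
    rw [hn, Set.empty_union]
    exact Set.Subset.antisymm
      (cpreStar_le δ (le_refl _) (cpre_Wseq δ Obj n)) (subset_cpreStar δ _)
  have hstab : ∀ m, n ≤ m → Wseq δ Obj m = Wseq δ Obj n := by
    intro m hm
    induction m with
    | zero => rw [Nat.le_zero.mp hm]
    | succ k ih =>
      rcases Nat.lt_or_ge n (k + 1) with h | h
      · have hk : n ≤ k := Nat.lt_succ_iff.mp h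
        have := ih hk
        show cpreStar δ _ = _
        rw [this, hn, Set.empty_union]
        exact Set.Subset.antisymm
          (cpreStar_le δ (le_refl _) (cpre_Wseq δ Obj n)) (subset_cpreStar δ _)
      · exact congrArg _ (Nat.le_antisymm h hm)
  apply Set.Subset.antisymm (hsub n)
  rw [← hUnion]
  apply Set.iUnion_subset
  intro m
  rcases Nat.le_total m n with h | h
  · exact hmono h
  · rw [hstab m h]
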